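/- Let D be a derivation from (F,𝓡) and A ∈ F^D \ F. Let D' be the restriction of D to the prime ancestors Anc⁰_D(A), i.e., the maximal derivation from (Anc⁰_D(A),𝓡) using only the triggers of triggers(D) in the given order. Then Anc_D(A) ∪ {A} ⊆ F^{D'}. -/

import Mathlib

namespace ChasePaper

/-- Terms are variables or constants, both indexed by natural numbers. -/
inductive Term : Type where
  | var : ℕ → Term
  | const : ℕ → Term
deriving DecidableEq

instance : Encodable Term :=
  Encodable.ofEquiv (ℕ ⊕ ℕ)
    { toFun := fun t => match t with
        | .var n => Sum.inl n
        | .const n => Sum.inr n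
      invFun := fun s => match s with
        | .inl n => .var n
        | .inr n => .const n
      left_inv := by intro t; cases t <;> rfl
      right_inv := by intro s; cases s <;> rfl }

/-- An atom is a predicate together with a list of argument terms. -/
structure Atom : Type where
  pred : ℕ
  args : List Term
deriving DecidableEq

instance : Encodable Atom :=
  Encodable.ofEquiv (ℕ × List Term)
    { toFun := fun A => (A.pred, A.args)
      invFun := fun p => ⟨p.1, p.2⟩
      left_inv := by intro A; rfl
      right_inv := by intro p; rfl }

/-- The variables occurring in a term. -/
def Term.vars : Term → Finset ℕ
  | .var n => {n}
  | .const _ => ∅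

/-- The variables occurring in an atom. -/
def Atom.vars (A : Atom) : Finset ℕ := A.args.toFinset.biUnion Term.vars

/-- Applying a substitution to a term. -/
def Term.subst (σ : ℕ → Term) : Term → Term
  | .var n => σ n
  | .const c => .const c

/-- Applying a substitution to an atom. -/
def Atom.subst (σ : ℕ → Term) (A : Atom) : Atom := ⟨A.pred, A.args.map (Term.subst σ)⟩

/-- The variables occurring in a set of atoms. -/
def setVars (F : Set Atom) : Set ℕ := ⋃ A ∈ F, ↑A.vars

/-- `σ` is a homomorphism from the atomset `F` to the atomset `F'`. -/
def IsHomOn (σ : ℕ → Term) (F F' : Set Atom) : Prop := ∀ A ∈ F, A.subst σ ∈ F'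

/-- `σ` is a retraction from `F` to its subset `F'`: it is the identity on the
terms of `F'` and maps `F` onto `F'`. -/
def IsRetraction (σ : ℕ → Term) (F F' : Set Atom) : Prop :=
  F' ⊆ F ∧ (∀ x ∈ setVars F', σ x = Term.var x) ∧ (Atom.subst σ) '' F = F'

/-- An existential rule, given by its body and its head. -/
structure Rule : Type where
  body : List Atom
  head : List Atom
deriving DecidableEq

instance : Encodable Rule :=
  Encodable.ofEquiv (List Atom × List Atom)
    { toFun := fun R => (R.body, R.head)
      invFun := fun p => ⟨p.1, p.2⟩
      left_inv := by intro R; rfl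
      right_inv := by intro p; rfl }

def Rule.bodyVars (R : Rule) : Finset ℕ := R.body.toFinset.biUnion Atom.vars
def Rule.headVars (R : Rule) : Finset ℕ := R.head.toFinset.biUnion Atom.vars

/-- The frontier of a rule: the variables shared by its body and its head. -/
def Rule.frontier (R : Rule) : Finset ℕ := R.bodyVars ∩ R.headVars

/-- The existential variables of a rule: head variables not occurring in the body. -/
def Rule.existVars (R : Rule) : Finset ℕ := R.headVars \ R.bodyVars

/-- The substitution determined by an association list. -/
def SubL.fn (σ : List (ℕ × Term)) : ℕ → Term := fun n =>
  match σ.find? (fun p => p.1 == n) with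
  | some p => p.2
  | none => Term.var n

/-- A trigger: a rule together with a substitution, represented as an association list. -/
structure Trigger : Type where
  rule : Rule
  π : List (ℕ × Term)
deriving DecidableEq

instance : Encodable Trigger :=
  Encodable.ofEquiv (Rule × List (ℕ × Term))
    { toFun := fun t => (t.rule, t.π)
      invFun := fun p => ⟨p.1, p.2⟩
      left_inv := by intro t; rfl
      right_inv := by intro p; rfl }

/-- The homomorphism π of a trigger, as a substitution. -/
def Trigger.πfn (t : Trigger) : ℕ → Term := SubL.fn t.π

/-- The fresh variable `z_t` associated to trigger `t` and existential variable `z`. -/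
def Trigger.freshVar (t : Trigger) (z : ℕ) : Term :=
  Term.var (Nat.pair (Encodable.encode t) z)

/-- The extension `π^s` of `π`, mapping each existential variable of the head to a
fresh variable indexed by the trigger. -/
def Trigger.πs (t : Trigger) : ℕ → Term := fun n =>
  if n ∈ t.rule.existVars then t.freshVar n else t.πfn n

/-- support(t) = π(body(R)). -/
def Trigger.support (t : Trigger) : Finset Atom :=
  (t.rule.body.map (Atom.subst t.πfn)).toFinset

/-- output(t) = π^s(head(R)). -/
def Trigger.output (t : Trigger) : Finset Atom :=
  (t.rule.head.map (Atom.subst t.πs)).toFinset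

/-- A trigger is applicable on a factbase `F` if π maps the rule body into `F`. -/
def Trigger.applicableOn (t : Trigger) (F : Finset Atom) : Prop := t.support ⊆ F

instance (t : Trigger) (F : Finset Atom) : Decidable (t.applicableOn F) :=
  inferInstanceAs (Decidable (t.support ⊆ F))

/-- The factbase obtained after `i` steps from `F0` along the (partial) sequence
of triggers `ts`. -/
def chainFacts (F0 : Finset Atom) (ts : ℕ → Option Trigger) : ℕ → Finset Atom
  | 0 => F0
  | i + 1 =>
    chainFacts F0 ts i ∪
      (match ts i with
        | some t => t.output
        | none => ∅)

/-- A derivation from the knowledge base `(F0, 𝓡)`: a (possibly infinite) sequence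
of pairwise distinct triggers of rules of `𝓡`, each applicable on the factbase
produced so far. -/
structure Derivation (𝓡 : Set Rule) (F0 : Finset Atom) : Type where
  ts : ℕ → Option Trigger
  mem_rules : ∀ i t, ts i = some t → t.rule ∈ 𝓡
  applic : ∀ i t, ts i = some t → t.applicableOn (chainFacts F0 ts i)
  distinct : ∀ i j t, ts i = some t → ts j = some t → i = j

namespace Derivation

variable {𝓡 : Set Rule} {F0 : Finset Atom}

/-- The factbase `F_i` of the derivation. -/
def facts (D : Derivation 𝓡 F0) (i : ℕ) : Finset Atom := chainFacts F0 D.ts i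

/-- `F^D`, the set of all atoms inferred by the derivation. -/
def allFacts (D : Derivation 𝓡 F0) : Set Atom := ⋃ i, ↑(D.facts i)

/-- The set of triggers used by the derivation. -/
def trigSet (D : Derivation 𝓡 F0) : Set Trigger := {t | ∃ i, D.ts i = some t}

/-- The list of the triggers of `D` at positions `< i`, in order. -/
def hist (D : Derivation 𝓡 F0) (i : ℕ) : List Trigger := (List.range i).filterMap D.ts

def rankAux (D : Derivation 𝓡 F0) : ℕ → Atom → ℕ
  | 0, _ => 0
  | i + 1, A =>
    if A ∈ D.facts i then D.rankAux i A
    else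
      match D.ts i with
      | some t => t.support.sup (D.rankAux i) + 1
      | none => 0

open Classical in
/-- The rank of an atom in a derivation (`0` for atoms not inferred by `D`): initial
atoms have rank 0, and an atom produced by a trigger has rank one plus the maximal
rank of the atoms in the support of this trigger. -/
noncomputable def rank (D : Derivation 𝓡 F0) (A : Atom) : ℕ :=
  if h : ∃ i, A ∈ D.facts i then D.rankAux (Nat.find h) A else 0

/-- The rank of the trigger applied at position `i` (`0` if there is none):
one plus the maximal rank of the atoms of its support. -/
noncomputable def trigRank (D : Derivation 𝓡 F0) (i : ℕ) : ℕ :=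
  match D.ts i with
  | some t => t.support.sup D.rank + 1
  | none => 0

/-- The depth of a derivation: the maximal rank of its atoms (possibly `⊤`). -/
noncomputable def depth (D : Derivation 𝓡 F0) : ℕ∞ :=
  ⨆ A ∈ D.allFacts, (D.rank A : ℕ∞)

/-- Rank-compatibility: later triggers have larger or equal rank. -/
def RankCompatible (D : Derivation 𝓡 F0) : Prop :=
  ∀ i j, i < j → D.ts i ≠ none → D.ts j ≠ none → D.trigRank i ≤ D.trigRank j

/-- Position `i` is a rank mark: the next applied trigger has strictly greater rank. -/
def RankMark (D : Derivation 𝓡 F0) (i : ℕ) : Prop :=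
  D.ts i ≠ none ∧
    ∃ j, i < j ∧ D.ts j ≠ none ∧ D.trigRank i < D.trigRank j ∧
      ∀ l, i < l → l < j → D.ts l = none

lemma chainFacts_congr (F0 : Finset Atom) (ts ts' : ℕ → Option Trigger) :
    ∀ i, (∀ j, j < i → ts' j = ts j) → chainFacts F0 ts' i = chainFacts F0 ts i := by
  intro i
  induction i with
  | zero => intro _; rfl
  | succ i ih =>
    intro h
    have h1 := ih (fun j hj => h j (Nat.lt_succ_of_lt hj))
    have h2 := h i (Nat.lt_succ_self i)
    simp only [chainFacts, h1, h2]

/-- The prefix of `D` keeping only the triggers at positions `< k`. -/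
def prefixD (D : Derivation 𝓡 F0) (k : ℕ) : Derivation 𝓡 F0 where
  ts := fun i => if i < k then D.ts i else none
  mem_rules := by
    intro i t h
    by_cases hik : i < k
    · exact D.mem_rules i t (by simpa [hik] using h)
    · simp [hik] at h
  applic := by
    intro i t h
    by_cases hik : i < k
    · have heq : chainFacts F0 (fun i => if i < k then D.ts i else none) i
          = chainFacts F0 D.ts i :=
        chainFacts_congr F0 D.ts _ i (fun j hj => by
          have hjk : j < k := lt_trans hj hik
          simp [hjk])
      rw [heq]
      exact D.applic i t (by simpa [hik] using h)
    · simp [hik] at h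
  distinct := by
    intro i j t hi hj
    by_cases hik : i < k
    · by_cases hjk : j < k
      · exact D.distinct i j t (by simpa [hik] using hi) (by simpa [hjk] using hj)
      · simp [hjk] at hj
    · simp [hik] at hi

/-- `D'` agrees with `D` on all positions `< k`, i.e. `D'` extends the `k`-prefix of `D`. -/
def ExtendsPrefix (D' D : Derivation 𝓡 F0) (k : ℕ) : Prop :=
  ∀ i, i < k → D'.ts i = D.ts i

/-- Finiteness of a derivation. -/
def IsFinite (D : Derivation 𝓡 F0) : Prop := ∃ N, ∀ i, N ≤ i → D.ts i = none

/-- The atom `A` is produced at step `i` of the derivation. -/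
def producedAt (D : Derivation 𝓡 F0) (i : ℕ) (A : Atom) : Prop :=
  A ∈ D.facts (i + 1) ∧ A ∉ D.facts i

/-- Edges of the chase graph of `D`. -/
def edge (D : Derivation 𝓡 F0) (A' A : Atom) : Prop :=
  ∃ i t, D.ts i = some t ∧ D.producedAt i A ∧ A' ∈ t.support

/-- `A'` is an ancestor of `A`: there is a nonempty path from `A'` to `A` in the
chase graph of `D`. -/
def anc (D : Derivation 𝓡 F0) (A' A : Atom) : Prop := Relation.TransGen D.edge A' A

open Classical in
/-- The prime ancestors of `A`: its ancestors lying in the initial factbase. -/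
noncomputable def anc0 (D : Derivation 𝓡 F0) (A : Atom) : Finset Atom :=
  F0.filter (fun A' => D.anc A' A)

/-- The factbases of the restriction of `D` to an initial factbase `G`. -/
def restFacts (D : Derivation 𝓡 F0) (G : Finset Atom) : ℕ → Finset Atom
  | 0 => G
  | i + 1 =>
    restFacts D G i ∪
      (match D.ts i with
        | some t => if t.applicableOn (restFacts D G i) then t.output else ∅
        | none => ∅)

/-- The trigger sequence of the restriction of `D` to `G`: a trigger of `D` is kept
exactly when it is applicable at the corresponding point. -/
def restTs (D : Derivation 𝓡 F0) (G : Finset Atom) : ℕ → Option Trigger := fun i =>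
  match D.ts i with
  | some t => if t.applicableOn (restFacts D G i) then some t else none
  | none => none

lemma restTs_eq_some {D : Derivation 𝓡 F0} {G : Finset Atom} {i : ℕ} {t : Trigger}
    (h : restTs D G i = some t) :
    D.ts i = some t ∧ t.applicableOn (restFacts D G i) := by
  unfold restTs at h
  cases hd : D.ts i with
  | none => rw [hd] at h; simp at h
  | some t' =>
    rw [hd] at h
    dsimp only at h
    by_cases ha : t'.applicableOn (restFacts D G i)
    · rw [if_pos ha] at h
      injection h with h'
      subst h'
      exact ⟨rfl, ha⟩
    · rw [if_neg ha] at h; simp at h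

lemma chainFacts_restTs (D : Derivation 𝓡 F0) (G : Finset Atom) (i : ℕ) :
    chainFacts G (restTs D G) i = restFacts D G i := by
  induction i with
  | zero => rfl
  | succ i ih =>
    simp only [chainFacts, restFacts, ih]
    congr 1
    unfold restTs
    cases hd : D.ts i with
    | none => rfl
    | some t =>
      by_cases ha : t.applicableOn (restFacts D G i) <;> simp [ha]

/-- The restriction of `D` to the initial factbase `G`: the maximal derivation from
`(G,𝓡)` that only uses the triggers of `D`, in the given order. -/
def restrict (D : Derivation 𝓡 F0) (G : Finset Atom) : Derivation 𝓡 G where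
  ts := restTs D G
  mem_rules := fun i t h => D.mem_rules i t (restTs_eq_some h).1
  applic := fun i t h => by
    rw [chainFacts_restTs D G i]
    exact (restTs_eq_some h).2
  distinct := fun i j t hi hj =>
    D.distinct i j t (restTs_eq_some hi).1 (restTs_eq_some hj).1

end Derivation

/-- An applicability condition: a predicate on (previously applied triggers, current
factbase, candidate trigger). A chase variant is the class of derivations induced by
such a condition. -/
def AppCond : Type := List Trigger → Finset Atom → Trigger → Prop

/-- `D` is an X-derivation of the chase variant given by the condition `C`: every
trigger of `D` is `C`-applicable on the corresponding prefix of `D`. -/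
def IsDeriv (C : AppCond) {𝓡 : Set Rule} {F0 : Finset Atom} (D : Derivation 𝓡 F0) : Prop :=
  ∀ i t, D.ts i = some t → C (D.hist i) (D.facts i) t

/-- Oblivious applicability: the trigger is applicable and has not been applied before. -/
def OCond : AppCond := fun h F t => t.applicableOn F ∧ t ∉ h

/-- Semi-oblivious applicability: no previously applied trigger of the same rule maps
the frontier in the same way. -/
def SOCond : AppCond := fun h F t =>
  t.applicableOn F ∧
    ¬ ∃ t' ∈ h, t'.rule = t.rule ∧ ∀ x ∈ t.rule.frontier, t'.πfn x = t.πfn x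

/-- Restricted applicability: there is no retraction from `F ∪ output(t)` to `F`. -/
def RCond : AppCond := fun _ F t =>
  t.applicableOn F ∧
    ¬ ∃ σ : ℕ → Term, IsRetraction σ (↑(F ∪ t.output)) (↑F)

/-- Equivalent-chase applicability: there is no homomorphism from `F ∪ output(t)` to `F`. -/
def ECond : AppCond := fun _ F t =>
  t.applicableOn F ∧
    ¬ ∃ σ : ℕ → Term, IsHomOn σ (↑(F ∪ t.output)) (↑F)

/-- Breadth-first derivations of the chase variant `C`: rank-compatible `C`-derivations
such that at every rank mark the corresponding prefix cannot be properly extended to a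
`C`-derivation of the same depth. -/
def IsBF (C : AppCond) {𝓡 : Set Rule} {F0 : Finset Atom} (D : Derivation 𝓡 F0) : Prop :=
  IsDeriv C D ∧ D.RankCompatible ∧
    ∀ i, D.RankMark i →
      ¬ ∃ D' : Derivation 𝓡 F0, IsDeriv C D' ∧ D'.ExtendsPrefix D (i + 1) ∧
          (∃ j, i + 1 ≤ j ∧ D'.ts j ≠ none) ∧ D'.depth = (D.prefixD (i + 1)).depth

/-- Fairness of a derivation with respect to the condition `C`: every trigger that
becomes applicable is eventually applied or ceases to be applicable. -/
def IsFair (C : AppCond) {𝓡 : Set Rule} {F0 : Finset Atom} (D : Derivation 𝓡 F0) : Prop :=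
  ∀ i t, t.rule ∈ 𝓡 → C (D.hist i) (D.facts i) t →
    ∃ k, i ≤ k ∧ (D.ts k = some t ∨ ¬ C (D.hist (k + 1)) (D.facts (k + 1)) t)

/-- A class of derivations (a chase variant). -/
def DerivClass := ∀ (𝓡 : Set Rule) (F0 : Finset Atom), Derivation 𝓡 F0 → Prop

/-- The class of `C`-derivations. -/
def derivClassOf (C : AppCond) : DerivClass := fun _ _ D => IsDeriv C D

/-- The class of breadth-first `C`-derivations. -/
def bfClassOf (C : AppCond) : DerivClass := fun _ _ D => IsBF C D

/-- The chase variant `X` preserves ancestry: for every `X`-derivation `D` and atom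
`A` inferred (but not initial), there is an `X`-derivation from the prime ancestors
of `A` producing `A` at the same rank. -/
def PreservesAncestry (X : DerivClass) : Prop :=
  ∀ (𝓡 : Set Rule) (F : Finset Atom) (D : Derivation 𝓡 F) (A : Atom),
    X 𝓡 F D → A ∈ D.allFacts → A ∉ F →
      ∃ D' : Derivation 𝓡 (D.anc0 A),
        X 𝓡 (D.anc0 A) D' ∧ A ∈ D'.allFacts ∧ D'.rank A = D.rank A

/-- The chase variant `X` is hereditary: restricting an `X`-derivation to a subset of
the initial factbase again yields an `X`-derivation. -/
def Hereditary (X : DerivClass) : Prop :=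
  ∀ (𝓡 : Set Rule) (F G : Finset Atom), G ⊆ F →
    ∀ D : Derivation 𝓡 F, X 𝓡 F D → X 𝓡 G (D.restrict G)


/- Follow `D` step by step. An atom of `{A} ∪ Anc(A)` lying in `F` is a prime
ancestor of `A` (as `A ∉ F`); one produced by a trigger `t` has the atoms of `support(t)` as
ancestors, so by induction they are already present in the restriction, where `t` is then
applicable and produces it as well. -/

namespace Derivation

variable {𝓡 : Set Rule} {F0 : Finset Atom} {D : Derivation 𝓡 F0}

lemma exists_mem_facts_of_anc {B A : Atom} (h : D.anc B A) : ∃ i, B ∈ D.facts i := by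
  obtain ⟨C, ⟨i, t, hts, -, hB⟩, -⟩ := Relation.TransGen.head'_iff.mp h
  exact ⟨i, D.applic i t hts hB⟩

lemma mem_output_of_producedAt {i : ℕ} {t : Trigger} {B : Atom} (hts : D.ts i = some t)
    (hB : D.producedAt i B) : B ∈ t.output := by
  have h := hB.1
  simp only [facts, chainFacts, hts, Finset.mem_union] at h
  exact h.resolve_left hB.2

lemma allFacts_restrict (G : Finset Atom) :
    (D.restrict G).allFacts = ⋃ i, ↑(D.restFacts G i) := by
  simp only [allFacts, facts, restrict, chainFacts_restTs]

lemma facts_inter_subset_restFacts {S : Set Atom} {G : Finset Atom}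
    (hS : ∀ A' B, D.edge A' B → B ∈ S → A' ∈ S) (hG : ↑F0 ∩ S ⊆ (G : Set Atom)) (i : ℕ) :
    ↑(D.facts i) ∩ S ⊆ (D.restFacts G i : Set Atom) := by
  induction i with
  | zero => exact hG
  | succ i ih =>
    rintro B ⟨hBi, hBS⟩
    by_cases hold : B ∈ D.facts i
    · exact Finset.mem_union_left _ (ih ⟨hold, hBS⟩)
    obtain ⟨t, hts⟩ : ∃ t, D.ts i = some t := by
      cases hts : D.ts i with
      | none =>
        simp only [facts, chainFacts, hts, Finset.union_empty] at hBi
        exact absurd hBi hold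
      | some t => exact ⟨t, rfl⟩
    have hprod : D.producedAt i B := ⟨hBi, hold⟩
    have happ : t.applicableOn (D.restFacts G i) := fun A' hA' =>
      ih ⟨D.applic i t hts hA', hS A' B ⟨i, t, hts, hprod, hA'⟩ hBS⟩
    simp only [restFacts, hts, if_pos happ]
    exact Finset.mem_union_right _ (mem_output_of_producedAt hts hprod)

end Derivation

/-- the restriction of a derivation to the prime ancestors of an atom A
infers A together with all its ancestors. -/
theorem statement9 (𝓡 : Set Rule) (F : Finset Atom) (D : Derivation 𝓡 F)
    (A : Atom) (hA : A ∈ D.allFacts) (hA0 : A ∉ F) :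
    insert A {A' | D.anc A' A} ⊆ (D.restrict (D.anc0 A)).allFacts := by
  set S : Set Atom := insert A {A' | D.anc A' A}
  have hS : ∀ A' B, D.edge A' B → B ∈ S → A' ∈ S := by
    rintro A' B hedge (rfl | hB)
    · exact Or.inr (.single hedge)
    · exact Or.inr (.head hedge hB)
  have hG : ↑F ∩ S ⊆ (D.anc0 A : Set Atom) := by
    rintro B ⟨hBF, rfl | hB⟩
    · exact absurd hBF hA0
    · simpa [Derivation.anc0] using ⟨hBF, hB⟩
  intro B hB
  obtain ⟨i, hBi⟩ : ∃ i, B ∈ D.facts i := by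
    rcases hB with rfl | hB
    · exact Set.mem_iUnion.mp hA
    · exact Derivation.exists_mem_facts_of_anc hB
  rw [Derivation.allFacts_restrict]
  exact Set.mem_iUnion.mpr ⟨i, Derivation.facts_inter_subset_restFacts hS hG i ⟨hBi, hB⟩⟩

end ChasePaper
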